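/- Let q be an even prime power. In PG(2, q), the union of the four lines {X=0}, {Y=0}, {Z=0}, {X+Y+Z=0} together with the point (1:1:1) is a 3-fold blocking set of size 4q − 1: every line of PG(2, q) meets this set in at least 3 points. -/

import Mathlib

/-- The relative trace `x ↦ x + x^q + ⋯ + x^{q^{h-1}}`. -/
def Tr (q h : ℕ) {K : Type*} [Field K] (x : K) : K :=
  ∑ i ∈ Finset.range h, x ^ q ^ i

/-- The line of `PG(2, K)` with equation `a 0 * X + a 1 * Y + a 2 * Z = 0`. -/
def projLine {K : Type*} [Field K] (a : Fin 3 → K) :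
    Set (Projectivization K (Fin 3 → K)) :=
  {P | ∑ i, a i * P.rep i = 0}

/-- A subset of `PG(2, K)` is a line if it is `projLine a` for some nonzero `a`. -/
def IsLine {K : Type*} [Field K] (ℓ : Set (Projectivization K (Fin 3 → K))) : Prop :=
  ∃ a : Fin 3 → K, a ≠ 0 ∧ ℓ = projLine a

/-- The trace-construction point set
`{(x : Tr(x) : y) : x ∈ F_{q^h}, y ∈ F_q, (x,y) ≠ (0,0)}` in `PG(2, q^h)`. -/
def traceSet (q h : ℕ) (F K : Type*) [Field F] [Field K] [Algebra F K] :
    Set (Projectivization K (Fin 3 → K)) :=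
  {P | ∃ (x : K) (y : F), (x ≠ 0 ∨ y ≠ 0) ∧
    ∃ hv : (![x, Tr q h x, algebraMap F K y] : Fin 3 → K) ≠ 0,
      P = Projectivization.mk K (![x, Tr q h x, algebraMap F K y]) hv}

/-!
Normalising the first coordinate, the points off the line `X = 0` are the affine points
`(1 : y : z)`, and the whole line `X = 0` lies in the set. Over `y = 0` all `q` affine points lie
in the set; over each `y ≠ 0` exactly two do, `z = 0` and `z = 1 + y`, except that for `y = 1`
these coincide (characteristic 2) and `(1 : 1 : 1)` supplies the second. This gives
`q + 2 (q - 1) + (q + 1) = 4q - 1` points.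

Permuting coordinates preserves the set, so a line `a₀X + a₁Y + a₂Z = 0` may be assumed to have
`a₀ = 0` or no zero coefficient. In the latter case it meets `X = 0`, `Y = 0`, `Z = 0` in three
distinct points. If `a₀ = 0`, it passes through `(1 : 0 : 0)` and meets `X = 0` in `(0 : a₂ : a₁)`
and `X + Y + Z = 0` in `(a₁ + a₂ : a₂ : a₁)`; these coincide only when `a₁ = a₂`, and then
`(1 : 1 : 1)` is on the line.
-/

open Projectivization Matrix
open scoped LinearAlgebra.Projectivization

section

variable {K : Type*} [Field K]

lemma mk_mem_projLine_iff {a v : Fin 3 → K} (hv : v ≠ 0) :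
    mk K v hv ∈ projLine a ↔ ∑ i, a i * v i = 0 := by
  obtain ⟨c, hc⟩ := exists_smul_eq_mk_rep K v hv
  simp only [projLine, Set.mem_ofPred_eq, ← hc, Units.smul_def, Pi.smul_apply, smul_eq_mul,
    mul_left_comm _ (c : K), ← Finset.mul_sum, mul_eq_zero, c.ne_zero, false_or]

variable (K) in
def quadrilateralSet : Set (ℙ K (Fin 3 → K)) :=
  projLine ![1, 0, 0] ∪ projLine ![0, 1, 0] ∪ projLine ![0, 0, 1] ∪ projLine ![1, 1, 1]
    ∪ {mk K ![1, 1, 1] (by simp)}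

lemma mk_mem_quadrilateralSet_iff {v : Fin 3 → K} (hv : v ≠ 0) :
    mk K v hv ∈ quadrilateralSet K ↔ (∃ i, v i = 0) ∨ ∑ i, v i = 0 ∨ ∀ i j, v i = v j := by
  have h111 : mk K v hv = mk K ![1, 1, 1] (by simp) ↔ ∀ i j, v i = v j := by
    rw [mk_eq_mk_iff']
    refine ⟨fun ⟨c, hc⟩ i j ↦ ?_, fun h ↦ ⟨v 0, funext fun i ↦ ?_⟩⟩
    · subst hc; fin_cases i <;> fin_cases j <;> simp
    · rw [h i 0]; fin_cases i <;> simp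
  simp only [quadrilateralSet, Set.mem_union, mk_mem_projLine_iff, Fin.sum_univ_three,
    Set.mem_singleton_iff, h111, Fin.exists_fin_succ]
  simp [or_assoc]

def affinePoint (p : K × K) : ℙ K (Fin 3 → K) := mk K ![1, p.1, p.2] (by simp)

def pointAtInfinity : Option K → ℙ K (Fin 3 → K)
  | none => mk K ![0, 0, 1] (by simp)
  | some z => mk K ![0, 1, z] (by simp)

lemma affinePoint_injective : Function.Injective (affinePoint (K := K)) := by
  rintro ⟨y, z⟩ ⟨y', z'⟩ h
  simp only [affinePoint, mk_eq_mk_iff_crossProduct_eq_zero, cross_apply, cons_eq_zero_iff,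
    zero_empty, cons_val_zero, cons_val_one, cons_val, Fin.isValue] at h
  grind

lemma pointAtInfinity_injective : Function.Injective (pointAtInfinity (K := K)) := by
  rintro (_ | z) (_ | z') h <;>
    simp only [pointAtInfinity, mk_eq_mk_iff_crossProduct_eq_zero, cross_apply, cons_eq_zero_iff,
      zero_empty, cons_val_zero, cons_val_one, cons_val, Fin.isValue] at h ⊢ <;>
    grind

lemma affinePoint_ne_pointAtInfinity (p : K × K) (o : Option K) :
    affinePoint p ≠ pointAtInfinity o := by
  cases o <;> simp [affinePoint, pointAtInfinity, mk_eq_mk_iff_crossProduct_eq_zero, cross_apply]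

lemma sumElim_affinePoint_pointAtInfinity_surjective :
    Function.Surjective (Sum.elim (affinePoint (K := K)) pointAtInfinity) := by
  intro P
  induction P using ind with | h v hv =>
  classical
  refine if h0 : v 0 = 0 then
      if h1 : v 1 = 0 then ⟨.inr none, ?_⟩ else ⟨.inr (some (v 2 / v 1)), ?_⟩
    else ⟨.inl (v 1 / v 0, v 2 / v 0), ?_⟩ <;>
  simp only [Sum.elim_inl, Sum.elim_inr, affinePoint, pointAtInfinity,
    mk_eq_mk_iff_crossProduct_eq_zero, cross_apply, cons_eq_zero_iff, zero_empty, cons_val_zero,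
    cons_val_one, cons_val, Fin.isValue] <;>
  grind

lemma ncard_eq_card_affine_add_card_infinity [Finite K] (S : Set (ℙ K (Fin 3 → K))) :
    S.ncard = Nat.card {p // affinePoint p ∈ S} + Nat.card {o // pointAtInfinity o ∈ S} := by
  have hinj : Function.Injective (Sum.elim (affinePoint (K := K)) pointAtInfinity) :=
    affinePoint_injective.sumElim pointAtInfinity_injective affinePoint_ne_pointAtInfinity
  rw [← Set.ncard_preimage_of_injective_subset_range hinj
    (by simp [sumElim_affinePoint_pointAtInfinity_surjective.range_eq]),
    ← Nat.card_coe_set_eq, ← Nat.card_sum]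
  exact Nat.card_congr Equiv.subtypeSum

lemma pointAtInfinity_mem_quadrilateralSet (o : Option K) :
    pointAtInfinity o ∈ quadrilateralSet K := by
  cases o <;> simp [pointAtInfinity, mk_mem_quadrilateralSet_iff, Fin.exists_fin_succ]

lemma affinePoint_mem_quadrilateralSet_iff {y z : K} :
    affinePoint (y, z) ∈ quadrilateralSet K ↔
      y = 0 ∨ z = 0 ∨ 1 + y + z = 0 ∨ (y = 1 ∧ z = 1) := by
  simp only [affinePoint, mk_mem_quadrilateralSet_iff, Fin.exists_fin_succ, Fin.forall_fin_succ,
    Fin.sum_univ_three, cons_val_zero, cons_val_one, cons_val, cons_val_succ, cons_val_fin_one,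
    Fin.isValue]
  grind

lemma card_affineFiber_zero :
    Nat.card {z // affinePoint (0, z) ∈ quadrilateralSet K} = Nat.card K := by
  simp [affinePoint_mem_quadrilateralSet_iff]

lemma card_affineFiber_of_ne_zero [CharP K 2] {y : K} (hy : y ≠ 0) :
    Nat.card {z // affinePoint (y, z) ∈ quadrilateralSet K} = 2 := by
  obtain ⟨w, hw0, hw⟩ : ∃ w : K, w ≠ 0 ∧
      ∀ z, affinePoint (y, z) ∈ quadrilateralSet K ↔ z = 0 ∨ z = w := by
    by_cases hy1 : y = 1
    · exact ⟨1, one_ne_zero, fun z ↦ by rw [affinePoint_mem_quadrilateralSet_iff]; grind⟩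
    · exact ⟨1 + y, by grind, fun z ↦ by rw [affinePoint_mem_quadrilateralSet_iff]; grind⟩
  rw [Nat.card_congr (Equiv.subtypeEquivRight hw)]
  exact (Nat.card_coe_set_eq {0, w}).trans (Set.ncard_pair hw0.symm)

lemma ncard_quadrilateralSet [Fintype K] [CharP K 2] :
    (quadrilateralSet K).ncard = 4 * Fintype.card K - 1 := by
  classical
  rw [ncard_eq_card_affine_add_card_infinity,
    Nat.card_congr (Equiv.subtypeProdEquivSigmaSubtype
      fun y z ↦ affinePoint (y, z) ∈ quadrilateralSet K),
    Nat.card_sigma, Fintype.sum_eq_add_sum_compl 0, card_affineFiber_zero,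
    Finset.sum_congr rfl fun y hy ↦ card_affineFiber_of_ne_zero (by simpa using hy),
    Nat.card_congr (Equiv.subtypeUnivEquiv pointAtInfinity_mem_quadrilateralSet)]
  simp only [Finset.sum_const, Finset.card_compl, Finset.card_singleton, smul_eq_mul,
    Nat.card_eq_fintype_card, Fintype.card_option]
  have := Fintype.card_pos (α := K)
  omega

def permuteCoords {ι : Type*} (σ : Equiv.Perm ι) : ℙ K (ι → K) → ℙ K (ι → K) :=
  map (LinearMap.funLeft K K σ) (LinearMap.funLeft_injective_of_surjective _ _ _ σ.surjective)

lemma permuteCoords_mk {ι : Type*} (σ : Equiv.Perm ι) {v : ι → K} (hv : v ≠ 0) :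
    permuteCoords σ (mk K v hv) = mk K (v ∘ σ) (σ.surjective.injective_comp_right.ne hv) :=
  rfl

lemma permuteCoords_injective {ι : Type*} (σ : Equiv.Perm ι) :
    Function.Injective (permuteCoords (K := K) σ) :=
  map_injective _ _

lemma permuteCoords_mem_projLine_iff (σ : Equiv.Perm (Fin 3)) {a : Fin 3 → K}
    {P : ℙ K (Fin 3 → K)} : permuteCoords σ P ∈ projLine (a ∘ σ) ↔ P ∈ projLine a := by
  induction P using ind with | h v hv =>
  simp only [permuteCoords_mk, mk_mem_projLine_iff, Function.comp_apply]
  rw [Equiv.sum_comp σ (fun i ↦ a i * v i)]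

lemma permuteCoords_mem_quadrilateralSet_iff (σ : Equiv.Perm (Fin 3)) {P : ℙ K (Fin 3 → K)} :
    permuteCoords σ P ∈ quadrilateralSet K ↔ P ∈ quadrilateralSet K := by
  induction P using ind with | h v hv =>
  rw [permuteCoords_mk, mk_mem_quadrilateralSet_iff, mk_mem_quadrilateralSet_iff]
  simp only [Function.comp_apply, Equiv.sum_comp σ v]
  exact or_congr (σ.surjective.exists (p := fun i ↦ v i = 0)).symm
    (or_congr Iff.rfl (σ.surjective.forall₂ (p := fun i j ↦ v i = v j)).symm)

lemma ncard_projLine_inter_le_comp [Finite K] (σ : Equiv.Perm (Fin 3)) (a : Fin 3 → K) :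
    (projLine a ∩ quadrilateralSet K).ncard ≤ (projLine (a ∘ σ) ∩ quadrilateralSet K).ncard :=
  Set.ncard_le_ncard_of_injOn (permuteCoords σ)
    (fun _ ⟨hℓ, hB⟩ ↦ ⟨(permuteCoords_mem_projLine_iff σ).2 hℓ,
      (permuteCoords_mem_quadrilateralSet_iff σ).2 hB⟩)
    (permuteCoords_injective σ).injOn

lemma three_le_ncard_of_mk [Finite K] {S : Set (ℙ K (Fin 3 → K))} {u v w : Fin 3 → K}
    (hu : u ≠ 0) (hv : v ≠ 0) (hw : w ≠ 0)
    (huS : mk K u hu ∈ S) (hvS : mk K v hv ∈ S) (hwS : mk K w hw ∈ S)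
    (huv : u ⨯₃ v ≠ 0) (huw : u ⨯₃ w ≠ 0) (hvw : v ⨯₃ w ≠ 0) : 3 ≤ S.ncard :=
  (Set.two_lt_ncard_iff S.toFinite).2 ⟨_, _, _, huS, hvS, hwS,
    (mk_eq_mk_iff_crossProduct_eq_zero hu hv).not.2 huv,
    (mk_eq_mk_iff_crossProduct_eq_zero hu hw).not.2 huw,
    (mk_eq_mk_iff_crossProduct_eq_zero hv hw).not.2 hvw⟩

lemma three_le_ncard_projLine_inter_of_apply_zero_eq_zero [Finite K] [CharP K 2]
    {a : Fin 3 → K} (ha : a ≠ 0) (h0 : a 0 = 0) :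
    3 ≤ (projLine a ∩ quadrilateralSet K).ncard := by
  have ha' : a 1 ≠ 0 ∨ a 2 ≠ 0 := by
    by_contra! h
    exact ha (funext fun i ↦ by fin_cases i <;> simp [h0, h])
  by_cases h12 : a 1 = a 2
  · refine three_le_ncard_of_mk (u := ![0, a 2, a 1]) (v := ![1, 0, 0]) (w := ![1, 1, 1])
      ?_ ?_ ?_ ?_ ?_ ?_ ?_ ?_ ?_ <;>
    simp only [Set.mem_inter_iff, mk_mem_projLine_iff, mk_mem_quadrilateralSet_iff,
      Fin.sum_univ_three, Fin.exists_fin_succ, Fin.forall_fin_succ, cross_apply, ne_eq,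
      cons_eq_zero_iff, zero_empty, cons_val_zero, cons_val_one, cons_val, cons_val_succ,
      cons_val_fin_one, Fin.isValue] <;>
    grind
  · refine three_le_ncard_of_mk (u := ![0, a 2, a 1]) (v := ![1, 0, 0])
      (w := ![a 1 + a 2, a 2, a 1]) ?_ ?_ ?_ ?_ ?_ ?_ ?_ ?_ ?_ <;>
    simp only [Set.mem_inter_iff, mk_mem_projLine_iff, mk_mem_quadrilateralSet_iff,
      Fin.sum_univ_three, Fin.exists_fin_succ, Fin.forall_fin_succ, cross_apply, ne_eq,
      cons_eq_zero_iff, zero_empty, cons_val_zero, cons_val_one, cons_val, cons_val_succ,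
      cons_val_fin_one, Fin.isValue] <;>
    grind

lemma three_le_ncard_projLine_inter_of_forall_ne_zero [Finite K] [CharP K 2] {a : Fin 3 → K}
    (ha : ∀ i, a i ≠ 0) : 3 ≤ (projLine a ∩ quadrilateralSet K).ncard := by
  refine three_le_ncard_of_mk (u := ![0, a 2, a 1]) (v := ![a 2, 0, a 0])
    (w := ![a 1, a 0, 0]) ?_ ?_ ?_ ?_ ?_ ?_ ?_ ?_ ?_ <;>
  simp only [Set.mem_inter_iff, mk_mem_projLine_iff, mk_mem_quadrilateralSet_iff,
    Fin.sum_univ_three, Fin.exists_fin_succ, Fin.forall_fin_succ, cross_apply, ne_eq,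
    cons_eq_zero_iff, zero_empty, cons_val_zero, cons_val_one, cons_val, cons_val_succ,
    cons_val_fin_one, Fin.isValue] <;>
  grind

theorem three_le_ncard_projLine_inter [Finite K] [CharP K 2] {a : Fin 3 → K} (ha : a ≠ 0) :
    3 ≤ (projLine a ∩ quadrilateralSet K).ncard := by
  by_cases hz : ∃ i, a i = 0
  · obtain ⟨i, hi⟩ := hz
    set σ := Equiv.swap 0 i
    have hσ : a ∘ σ ≠ 0 := σ.surjective.injective_comp_right.ne ha
    calc 3 ≤ (projLine (a ∘ σ) ∩ quadrilateralSet K).ncard :=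
          three_le_ncard_projLine_inter_of_apply_zero_eq_zero hσ (by simpa [σ] using hi)
      _ ≤ _ := by
          simpa [Function.comp_assoc] using ncard_projLine_inter_le_comp σ.symm (a ∘ σ)
  · exact three_le_ncard_projLine_inter_of_forall_ne_zero (not_exists.1 hz)

end

/-- For `q` even, the four lines `{X=0}, {Y=0}, {Z=0}, {X+Y+Z=0}` of
`PG(2, q)` together with the point `(1:1:1)` form a 3-fold blocking set of size
`4q − 1`. -/
theorem stmt_18 {K : Type*} [Field K] [Fintype K]
    (q : ℕ) (hcard : Fintype.card K = q)
    (heven : ringChar K = 2)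
    (B : Set (Projectivization K (Fin 3 → K)))
    (hB : B = projLine ![1, 0, 0] ∪ projLine ![0, 1, 0] ∪ projLine ![0, 0, 1]
      ∪ projLine ![1, 1, 1]
      ∪ {Projectivization.mk K ![1, 1, 1] (by intro hc; simpa using congrFun hc 0)}) :
    B.ncard = 4 * q - 1 ∧
    ∀ a : Fin 3 → K, a ≠ 0 → 3 ≤ (projLine a ∩ B).ncard := by
  have : CharP K 2 := ringChar.of_eq heven
  subst hB hcard
  exact ⟨ncard_quadrilateralSet, fun _ ha ↦ three_le_ncard_projLine_inter ha⟩
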